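/- arXiv:1202.1151 — 4 statements merged into one kernel-verified Lean document; each statement's English description precedes it below -/
import Mathlib

section
/- Let p ∈ ℝ^N with |p| = 1, and let Ω be the set of antisymmetric N×N matrices ω with entries in {-1,0,1}. For ω ∈ Ω set p_ω := ω p (i.e. (p_ω)_i = Σ_j ω_{ij} p^j). Then there exist constants c, C > 0 depending only on N such that for all q ∈ ℝ^N: c|q| ≤ Σ_{ω ∈ Ω} |⟨p_ω, q⟩| + |⟨p, q⟩| ≤ C|q|. -/
/-!
The upper bound holds because each `q ↦ ⟪p_ω, q⟫` is a bounded linear functional, of norm at most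
the operator norm of `ω` when `‖p‖ = 1`. For the lower bound, Lagrange's identity gives
`‖q‖² = ⟪p, q⟫² + ½ ∑_{a,b} (p_b q_a - p_a q_b)²` for a unit vector `p`, and each
`p_b q_a - p_a q_b` is `⟪p_ω, q⟫` for the elementary antisymmetric matrix `ω = E_ab - E_ba ∈ Ω`.
-/

open RealInnerProductSpace Finset

/-- The value map sending `Fin 3` to the allowed entries `{-1, 0, 1}`. -/
noncomputable def entryVal : Fin 3 → ℝ := ![(-1 : ℝ), 0, 1]

open Classical in
/-- The (finite) set of antisymmetric `N × N` matrices with entries in `{-1,0,1}`,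
encoded as functions `Fin N → Fin N → Fin 3` via `entryVal`. -/
noncomputable def OmegaSet (N : ℕ) : Finset (Fin N → Fin N → Fin 3) :=
  Finset.univ.filter (fun ω => ∀ i j, entryVal (ω i j) = - entryVal (ω j i))

/-- `p_ω := ω p`, i.e. `(p_ω)_i = ∑_j ω_{ij} p_j`. -/
noncomputable def pOmega {N : ℕ} (ω : Fin N → Fin N → Fin 3)
    (p : EuclideanSpace ℝ (Fin N)) : EuclideanSpace ℝ (Fin N) :=
  WithLp.toLp 2 (fun i => ∑ j, entryVal (ω i j) * p j)

open scoped Matrix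

section InnerProductSpace

variable {E : Type*} [NormedAddCommGroup E] [InnerProductSpace ℝ E]

theorem sum_abs_inner_apply_le {ι : Type*} (s : Finset ι) (A : ι → E →L[ℝ] E) (x y : E) :
    ∑ i ∈ s, |⟪A i x, y⟫| ≤ (∑ i ∈ s, ‖A i‖) * ‖x‖ * ‖y‖ := by
  rw [sum_mul, sum_mul]
  gcongr with i
  calc |⟪A i x, y⟫| ≤ ‖A i x‖ * ‖y‖ := abs_real_inner_le_norm _ _
    _ ≤ ‖A i‖ * ‖x‖ * ‖y‖ := by gcongr; exact (A i).le_opNorm x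

end InnerProductSpace

section Lagrange

variable {ι : Type*} [Fintype ι]

/-- Lagrange's identity; `p b * q a - p a * q b` are the coordinates of `p ∧ q`. -/
theorem sum_sq_wedge_eq (p q : EuclideanSpace ℝ ι) :
    ∑ a, ∑ b, (p b * q a - p a * q b) ^ 2 = 2 * (‖p‖ ^ 2 * ‖q‖ ^ 2 - ⟪p, q⟫ ^ 2) := by
  have expand : ∀ a b, (p b * q a - p a * q b) ^ 2
      = p b ^ 2 * q a ^ 2 + p a ^ 2 * q b ^ 2 - 2 * (p a * q a) * (p b * q b) := fun _ _ => by ring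
  simp only [expand, sum_add_distrib, sum_sub_distrib, ← mul_sum, ← sum_mul]
  simp only [EuclideanSpace.real_norm_sq_eq, PiLp.inner_apply, RCLike.inner_apply, conj_trivial,
    mul_comm (p _)]
  ring

theorem sum_sq_le_sq_sum_sum_abs {κ : Type*} [Fintype κ] (x : ι → κ → ℝ) :
    ∑ a, ∑ b, x a b ^ 2 ≤ (∑ a, ∑ b, |x a b|) ^ 2 :=
  calc ∑ a, ∑ b, x a b ^ 2 = ∑ a, ∑ b, |x a b| ^ 2 := by simp only [sq_abs]
    _ ≤ ∑ a, (∑ b, |x a b|) ^ 2 := by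
      gcongr with a; exact sum_sq_le_sq_sum_of_nonneg fun b _ => abs_nonneg (x a b)
    _ ≤ (∑ a, ∑ b, |x a b|) ^ 2 :=
      sum_sq_le_sq_sum_of_nonneg fun a _ => sum_nonneg fun b _ => abs_nonneg (x a b)

theorem norm_le_abs_inner_add_sum_abs_wedge {p : EuclideanSpace ℝ ι} (hp : ‖p‖ = 1)
    (q : EuclideanSpace ℝ ι) :
    ‖q‖ ≤ |⟪p, q⟫| + ∑ a, ∑ b, |p b * q a - p a * q b| := by
  have hsq := sum_sq_wedge_eq p q
  have hle := sum_sq_le_sq_sum_sum_abs fun a b => p b * q a - p a * q b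
  have hT : 0 ≤ ∑ a, ∑ b, |p b * q a - p a * q b| := by positivity
  rw [hp, one_pow, one_mul] at hsq
  rw [← pow_le_pow_iff_left₀ (norm_nonneg q) (by positivity) two_ne_zero]
  nlinarith [sq_abs ⟪p, q⟫, abs_nonneg ⟪p, q⟫]

end Lagrange

noncomputable def omegaMatrix {N : ℕ} (ω : Fin N → Fin N → Fin 3) : Matrix (Fin N) (Fin N) ℝ :=
  Matrix.of fun i j => entryVal (ω i j)

theorem pOmega_eq_toEuclideanCLM {N : ℕ} (ω : Fin N → Fin N → Fin 3)
    (p : EuclideanSpace ℝ (Fin N)) :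
    pOmega ω p = Matrix.toEuclideanCLM (𝕜 := ℝ) (omegaMatrix ω) p := rfl

theorem entryVal_zero : entryVal 0 = -1 := rfl
theorem entryVal_one : entryVal 1 = 0 := rfl
theorem entryVal_two : entryVal 2 = 1 := rfl

def elemOmega {N : ℕ} (a b : Fin N) : Fin N → Fin N → Fin 3 :=
  fun i j => if i = a ∧ j = b ∧ a ≠ b then 2 else if i = b ∧ j = a ∧ a ≠ b then 0 else 1

theorem omegaMatrix_elemOmega {N : ℕ} (a b : Fin N) :
    omegaMatrix (elemOmega a b) = Matrix.single a b 1 - Matrix.single b a 1 := by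
  ext i j
  simp only [omegaMatrix, elemOmega, Matrix.of_apply, Matrix.sub_apply, Matrix.single_apply]
  split_ifs <;> grind [entryVal_zero, entryVal_one, entryVal_two]

theorem mem_omegaSet_iff {N : ℕ} {ω : Fin N → Fin N → Fin 3} :
    ω ∈ OmegaSet N ↔ (omegaMatrix ω)ᵀ = -omegaMatrix ω := by
  simp only [OmegaSet, mem_filter, mem_univ, true_and, ← Matrix.ext_iff, Matrix.transpose_apply,
    Matrix.neg_apply, omegaMatrix, Matrix.of_apply]
  exact ⟨fun h i j => h j i, fun h i j => h j i⟩

theorem elemOmega_mem_omegaSet {N : ℕ} (a b : Fin N) : elemOmega a b ∈ OmegaSet N := by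
  rw [mem_omegaSet_iff, omegaMatrix_elemOmega]
  simp [Matrix.transpose_single]

theorem inner_pOmega_elemOmega {N : ℕ} (a b : Fin N) (p q : EuclideanSpace ℝ (Fin N)) :
    ⟪pOmega (elemOmega a b) p, q⟫ = p b * q a - p a * q b := by
  rw [pOmega_eq_toEuclideanCLM, real_inner_comm, Matrix.inner_toEuclideanCLM,
    omegaMatrix_elemOmega, Matrix.sub_mulVec, Matrix.single_mulVec_eq, Matrix.single_mulVec_eq]
  simp only [one_mul, dotProduct_sub, dotProduct_smul, dotProduct_single, mul_one, smul_eq_mul]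

theorem norm_le_mul_sum_abs_inner_pOmega {N : ℕ} {p : EuclideanSpace ℝ (Fin N)} (hp : ‖p‖ = 1)
    (q : EuclideanSpace ℝ (Fin N)) :
    ‖q‖ ≤ ((N : ℝ) ^ 2 + 1) * ((∑ ω ∈ OmegaSet N, |⟪pOmega ω p, q⟫|) + |⟪p, q⟫|) := by
  set S := ∑ ω ∈ OmegaSet N, |⟪pOmega ω p, q⟫|
  have hS : 0 ≤ S := sum_nonneg fun ω _ => abs_nonneg _
  have hwedge (a b : Fin N) : |p b * q a - p a * q b| ≤ S := by
    rw [← inner_pOmega_elemOmega]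
    exact single_le_sum (f := fun ω => |⟪pOmega ω p, q⟫|) (fun ω _ => abs_nonneg _)
      (elemOmega_mem_omegaSet a b)
  have hsum : ∑ a, ∑ b, |p b * q a - p a * q b| ≤ (N : ℝ) ^ 2 * S :=
    calc ∑ a, ∑ b, |p b * q a - p a * q b| ≤ ∑ _a : Fin N, ∑ _b : Fin N, S := by
          gcongr; exact hwedge ..
      _ = (N : ℝ) ^ 2 * S := by
          simp only [sum_const, card_univ, Fintype.card_fin, nsmul_eq_mul]; ring
  nlinarith [norm_le_abs_inner_add_sum_abs_wedge hp q, abs_nonneg ⟪p, q⟫]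

theorem stmt0 (N : ℕ) :
    ∃ c C : ℝ, 0 < c ∧ 0 < C ∧
      ∀ (p : EuclideanSpace ℝ (Fin N)), ‖p‖ = 1 →
        ∀ q : EuclideanSpace ℝ (Fin N),
          c * ‖q‖ ≤ (∑ ω ∈ OmegaSet N, |⟪pOmega ω p, q⟫|) + |⟪p, q⟫| ∧
          (∑ ω ∈ OmegaSet N, |⟪pOmega ω p, q⟫|) + |⟪p, q⟫| ≤ C * ‖q‖ := by
  set A := fun ω => Matrix.toEuclideanCLM (𝕜 := ℝ) (omegaMatrix ω)
  refine ⟨((N : ℝ) ^ 2 + 1)⁻¹, ∑ ω ∈ OmegaSet N, ‖A ω‖ + 1, by positivity, by positivity,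
    fun p hp q => ⟨?_, ?_⟩⟩
  · rw [inv_mul_le_iff₀ (by positivity)]
    exact norm_le_mul_sum_abs_inner_pOmega hp q
  · have hsum := sum_abs_inner_apply_le (OmegaSet N) A p q
    have hinner : |⟪p, q⟫| ≤ ‖q‖ := by simpa [hp] using abs_real_inner_le_norm p q
    simp only [pOmega_eq_toEuclideanCLM]
    rw [hp, mul_one] at hsum
    linarith
end

section
/- Let p, q ∈ ℝ^N with |p| = |q| = 1 and p ⊥ q, N ≥ 2. Then there exist indices i₀ ≠ k₀ such that |p_{i₀}| ≥ 1/(2√(N−1)) and |q_{k₀}| ≥ 1/(2√(N−1)). -/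
/-! Put `c² = 1 / (4 (N - 1))`. A unit vector `x` has, for every index `i` with `x i ^ 2 < 3 / 4`,
another index `j ≠ i` with `c² < x j ^ 2`: the other `N - 1` squares sum to more than `1 / 4`.
Bessel's inequality for the orthonormal pair `p, q` against the basis vector `e i` gives
`p i ^ 2 + q i ^ 2 ≤ 1`. So if `|p i| ≥ c`, either `q i ^ 2 < 3 / 4` and `q` has a large entry
away from `i`, or `p i ^ 2 ≤ 1 / 4` and `p` has a large entry away from `i` while `|q i| ≥ c`. -/

open RealInnerProductSpace Finset

lemma one_div_four_mul_sub_one_le (n : ℕ) : 1 / (4 * ((n : ℝ) - 1)) ≤ 1 / 4 := by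
  rcases n with _ | _ | n
  · norm_num
  · norm_num
  · gcongr
    push_cast
    linarith [(n.cast_nonneg : (0 : ℝ) ≤ n)]

lemma one_div_two_sqrt_le_abs {m y : ℝ} (h : 1 / (4 * m) ≤ y ^ 2) : 1 / (2 * √m) ≤ |y| := by
  rcases lt_or_ge m 0 with hm | hm
  · simp [Real.sqrt_eq_zero'.2 hm.le]
  · rw [← Real.sqrt_sq_eq_abs, Real.le_sqrt (by positivity) (by positivity)]
    rwa [div_pow, mul_pow, Real.sq_sqrt hm, one_pow, show (2 : ℝ) ^ 2 = 4 by norm_num]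

variable {ι : Type*} [Fintype ι]

lemma sq_apply_add_sq_apply_le_one {p q : EuclideanSpace ℝ ι} (hp : ‖p‖ = 1) (hq : ‖q‖ = 1)
    (hpq : ⟪p, q⟫ = 0) (i : ι) : p i ^ 2 + q i ^ 2 ≤ 1 := by
  classical
  have hpq' : Orthonormal ℝ ![p, q] := by simp [hp, hq, hpq]
  simpa [Fin.sum_univ_two, EuclideanSpace.inner_single_right] using
    hpq'.sum_inner_products_le (EuclideanSpace.single i (1 : ℝ)) (s := univ)

lemma exists_ne_one_div_four_mul_lt_sq {x : EuclideanSpace ℝ ι} (hx : ‖x‖ = 1) {i : ι}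
    (hi : x i ^ 2 < 3 / 4) : ∃ j ≠ i, 1 / (4 * ((Fintype.card ι : ℝ) - 1)) < x j ^ 2 := by
  classical
  have hrest : ∑ j ∈ univ.erase i, x j ^ 2 = 1 - x i ^ 2 := by
    rw [eq_sub_iff_add_eq, sum_erase_add _ _ (mem_univ i), ← EuclideanSpace.real_norm_sq_eq, hx,
      one_pow]
  have hcard : ((univ.erase i).card : ℝ) = Fintype.card ι - 1 := by
    rw [card_erase_of_mem (mem_univ i), card_univ, Nat.cast_sub (Fintype.card_pos_iff.2 ⟨i⟩), Nat.cast_one]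
  obtain ⟨j, hj, hlt⟩ := exists_lt_of_sum_lt (s := univ.erase i)
    (f := fun _ => 1 / (4 * ((Fintype.card ι : ℝ) - 1))) (g := fun j => x j ^ 2) <| by
      rw [sum_const, nsmul_eq_mul, hcard, hrest, mul_one_div, div_mul_eq_div_div_swap]
      calc _ ≤ 1 / 4 := by gcongr; exact div_self_le_one _
        _ < 1 - x i ^ 2 := by linarith
  exact ⟨j, ne_of_mem_erase hj, hlt⟩

lemma exists_one_div_four_mul_le_sq {x : EuclideanSpace ℝ ι} (hx : ‖x‖ = 1) :
    ∃ i, 1 / (4 * ((Fintype.card ι : ℝ) - 1)) ≤ x i ^ 2 := by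
  have hsum : ∑ i, x i ^ 2 ≠ 0 := by
    rw [← EuclideanSpace.real_norm_sq_eq, hx]
    norm_num
  obtain ⟨i, -, -⟩ := exists_ne_zero_of_sum_ne_zero hsum
  rcases lt_or_ge (x i ^ 2) (3 / 4) with hi | hi
  · obtain ⟨j, -, hj⟩ := exists_ne_one_div_four_mul_lt_sq hx hi
    exact ⟨j, hj.le⟩
  · exact ⟨i, (one_div_four_mul_sub_one_le _).trans (by linarith)⟩

theorem stmt2_general (N : ℕ)
    (p q : EuclideanSpace ℝ (Fin N)) (hp : ‖p‖ = 1) (hq : ‖q‖ = 1)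
    (hpq : ⟪p, q⟫ = 0) :
    ∃ i₀ k₀ : Fin N, i₀ ≠ k₀ ∧
      1 / (2 * Real.sqrt ((N : ℝ) - 1)) ≤ |p i₀| ∧
      1 / (2 * Real.sqrt ((N : ℝ) - 1)) ≤ |q k₀| := by
  suffices h : ∃ i₀ k₀ : Fin N, i₀ ≠ k₀ ∧
      1 / (4 * ((N : ℝ) - 1)) ≤ p i₀ ^ 2 ∧ 1 / (4 * ((N : ℝ) - 1)) ≤ q k₀ ^ 2 by
    obtain ⟨i₀, k₀, hne, hpi, hqk⟩ := h
    exact ⟨i₀, k₀, hne, one_div_two_sqrt_le_abs hpi, one_div_two_sqrt_le_abs hqk⟩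
  obtain ⟨i, hpi⟩ := exists_one_div_four_mul_le_sq hp
  have hpq_i := sq_apply_add_sq_apply_le_one hp hq hpq i
  rw [Fintype.card_fin] at hpi
  rcases lt_or_ge (q i ^ 2) (3 / 4) with hqi | hqi
  · obtain ⟨k, hki, hqk⟩ := exists_ne_one_div_four_mul_lt_sq hq hqi
    rw [Fintype.card_fin] at hqk
    exact ⟨i, k, hki.symm, hpi, hqk.le⟩
  · obtain ⟨j, hji, hpj⟩ := exists_ne_one_div_four_mul_lt_sq hp (i := i) (by linarith)
    rw [Fintype.card_fin] at hpj
    exact ⟨j, i, hji, hpj.le, (one_div_four_mul_sub_one_le N).trans (by linarith)⟩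

theorem stmt2 (N : ℕ) (hN : 2 ≤ N)
    (p q : EuclideanSpace ℝ (Fin N)) (hp : ‖p‖ = 1) (hq : ‖q‖ = 1)
    (hpq : ⟪p, q⟫ = 0) :
    ∃ i₀ k₀ : Fin N, i₀ ≠ k₀ ∧
      1 / (2 * Real.sqrt ((N : ℝ) - 1)) ≤ |p i₀| ∧
      1 / (2 * Real.sqrt ((N : ℝ) - 1)) ≤ |q k₀| :=
  stmt2_general N p q hp hq hpq
end

section
/- Let α ∈ [0,1] and ε ∈ (0,1). Then there exists a universal constant C such that for almost every x, y, η, ξ ∈ ℝ^n: | |η−y|^{−n+α} − |η−x|^{−n+α} | · | |ξ−y|^{−n+α} − |ξ−x|^{−n+α} | is bounded by C times the sum of: (i) |y−η|^{−n+α−ε}(|x−ξ|^{−n+α−ε} + |y−ξ|^{−n+α−ε})|x−y|^{2ε}; (ii) (|x−η|^{−n+α−ε} + |y−η|^{−n+α−ε})|y−ξ|^{−n+α−ε}|x−y|^{2ε}; (iii) |x−η|^{−n+α}|x−ξ|^{−n+α}·χ_{|x−y| > 2|x−ξ|}·χ_{|x−y| > 2|x−η|}. -/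
/-!
Write `b = n - α`, `d = |x - y|`, and for a point `p` put `r = |y - p|`, `s = |x - p|`, so that
`|r - s| ≤ d ≤ r + s`. Since `b ≤ n`, Bernoulli's inequality for `u = min(r,s)/max(r,s)` gives
`1 - u^b ≤ n (1 - u) ≤ n (1 - u)^ε`, i.e. `|r^{-b} - s^{-b}| ≤ n min(r,s)^{-b-ε} d^ε`.
If `d ≤ 2|x - η|`, then `|y - η| ≤ 3|x - η|`, so the `η`-factor is `≲ |y - η|^{-b-ε} d^ε`, and
bounding `min(r,s)^{-b-ε}` by the sum of both powers in the `ξ`-factor gives term (i);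
symmetrically `d ≤ 2|x - ξ|` gives (ii). Otherwise `x` lies within `d/2` of both `η` and `ξ`, so
`y` is farther from them than `x` is, and each factor is at most its `|x - ·|^{-b}` term: (iii).
-/

open Real

section RpowDifference

variable {N : ℕ} {b ε : ℝ}

lemma one_sub_rpow_le_natCast_mul_rpow {u : ℝ} (hu0 : 0 < u) (hu1 : u ≤ 1) (hbN : b ≤ N)
    (hε0 : 0 ≤ ε) (hε1 : ε ≤ 1) : 1 - u ^ b ≤ N * (1 - u) ^ ε := by
  have hpow : u ^ N ≤ u ^ b := by
    simpa only [rpow_natCast] using rpow_le_rpow_of_exponent_ge hu0 hu1 hbN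
  have bernoulli : 1 - u ^ N ≤ N * (1 - u) := by
    have := one_add_mul_le_pow (a := u - 1) (by linarith) N
    rw [add_sub_cancel] at this
    linarith
  have hroot : 1 - u ≤ (1 - u) ^ ε := by
    simpa using rpow_le_rpow_of_exponent_ge' (sub_nonneg.2 hu1) (by linarith) hε0 hε1
  calc 1 - u ^ b ≤ 1 - u ^ N := by linarith
    _ ≤ N * (1 - u) := bernoulli
    _ ≤ N * (1 - u) ^ ε := by gcongr

lemma rpow_neg_sub_rpow_neg_le {m M : ℝ} (hm : 0 < m) (hmM : m ≤ M) (hbN : b ≤ N)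
    (hε0 : 0 ≤ ε) (hε1 : ε ≤ 1) : m ^ (-b) - M ^ (-b) ≤ N * m ^ (-b - ε) * (M - m) ^ ε := by
  have hM : 0 < M := hm.trans_le hmM
  have hratio : M ^ (-b) = m ^ (-b) * (m / M) ^ b := by
    rw [div_rpow hm.le hM.le, rpow_neg hm.le, rpow_neg hM.le]
    field_simp [(rpow_pos_of_pos hm b).ne']
  have hgap : 1 - m / M ≤ (M - m) / m := by
    rw [one_sub_div hM.ne']
    gcongr
  calc m ^ (-b) - M ^ (-b) = m ^ (-b) * (1 - (m / M) ^ b) := by rw [hratio]; ring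
    _ ≤ m ^ (-b) * (N * (1 - m / M) ^ ε) := by
      gcongr
      exact one_sub_rpow_le_natCast_mul_rpow (by positivity) ((div_le_one hM).2 hmM) hbN hε0 hε1
    _ ≤ m ^ (-b) * (N * ((M - m) / m) ^ ε) := by
      gcongr
      rw [sub_nonneg]
      exact (div_le_one hM).2 hmM
    _ = N * m ^ (-b - ε) * (M - m) ^ ε := by
      rw [div_rpow (sub_nonneg.2 hmM) hm.le, rpow_sub hm]
      ring

lemma abs_rpow_neg_sub_rpow_neg_le {r s : ℝ} (hr : 0 < r) (hs : 0 < s) (hb0 : 0 ≤ b)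
    (hbN : b ≤ N) (hε0 : 0 ≤ ε) (hε1 : ε ≤ 1) :
    |r ^ (-b) - s ^ (-b)| ≤ N * min r s ^ (-b - ε) * |r - s| ^ ε := by
  wlog hrs : r ≤ s generalizing r s
  · rw [abs_sub_comm, abs_sub_comm r, min_comm]
    exact this hs hr (le_of_not_ge hrs)
  have hanti : s ^ (-b) ≤ r ^ (-b) := rpow_le_rpow_of_nonpos hr hrs (neg_nonpos.2 hb0)
  rw [min_eq_left hrs, abs_of_nonneg (sub_nonneg.2 hanti), abs_sub_comm,
    abs_of_nonneg (sub_nonneg.2 hrs)]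
  exact rpow_neg_sub_rpow_neg_le hr hrs hbN hε0 hε1

lemma min_rpow_neg_le_add {r s : ℝ} (hr : 0 ≤ r) (hs : 0 ≤ s) (c : ℝ) :
    min r s ^ (-c) ≤ r ^ (-c) + s ^ (-c) := by
  rcases min_choice r s with h | h <;> rw [h]
  · exact le_add_of_nonneg_right (rpow_nonneg hs _)
  · exact le_add_of_nonneg_left (rpow_nonneg hr _)

lemma min_rpow_neg_le_of_le_three_mul {r s c : ℝ} (hr : 0 < r) (hrs : r ≤ 3 * s)
    (hc : 0 ≤ c) : min r s ^ (-c) ≤ 3 ^ c * r ^ (-c) := by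
  rcases min_choice r s with h | h <;> rw [h]
  · exact le_mul_of_one_le_left (rpow_nonneg hr.le _) (one_le_rpow (by norm_num) hc)
  · calc s ^ (-c) ≤ (r / 3) ^ (-c) :=
          rpow_le_rpow_of_nonpos (by positivity) (by linarith) (neg_nonpos.2 hc)
      _ = 3 ^ c * r ^ (-c) := by
          rw [div_rpow hr.le (by norm_num), rpow_neg (by norm_num : (0 : ℝ) ≤ 3), div_inv_eq_mul,
            mul_comm]

variable {d r s : ℝ}

lemma abs_rpow_neg_sub_le_add (hr : 0 < r) (hs : 0 < s) (hrs : |r - s| ≤ d) (hb0 : 0 ≤ b)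
    (hbN : b ≤ N) (hε0 : 0 ≤ ε) (hε1 : ε ≤ 1) :
    |r ^ (-b) - s ^ (-b)| ≤ N * (s ^ (-b - ε) + r ^ (-b - ε)) * d ^ ε :=
  calc |r ^ (-b) - s ^ (-b)| ≤ N * min r s ^ (-b - ε) * |r - s| ^ ε :=
        abs_rpow_neg_sub_rpow_neg_le hr hs hb0 hbN hε0 hε1
    _ ≤ N * (s ^ (-b - ε) + r ^ (-b - ε)) * d ^ ε := by
        rw [min_comm, ← neg_add']
        gcongr
        exact min_rpow_neg_le_add hs.le hr.le _

lemma abs_rpow_neg_sub_le_of_le_two_mul (hr : 0 < r) (hs : 0 < s) (hrs : |r - s| ≤ d)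
    (hds : d ≤ 2 * s) (hb0 : 0 ≤ b) (hbN : b ≤ N) (hε0 : 0 ≤ ε) (hε1 : ε ≤ 1) :
    |r ^ (-b) - s ^ (-b)| ≤ N * 3 ^ (b + ε) * r ^ (-b - ε) * d ^ ε := by
  have hr3s : r ≤ 3 * s := by linarith [le_abs_self (r - s)]
  calc |r ^ (-b) - s ^ (-b)| ≤ N * min r s ^ (-b - ε) * |r - s| ^ ε :=
        abs_rpow_neg_sub_rpow_neg_le hr hs hb0 hbN hε0 hε1
    _ ≤ N * (3 ^ (b + ε) * r ^ (-b - ε)) * d ^ ε := by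
        rw [← neg_add']
        gcongr
        exact min_rpow_neg_le_of_le_three_mul hr hr3s (by linarith)
    _ = N * 3 ^ (b + ε) * r ^ (-b - ε) * d ^ ε := by ring

lemma abs_rpow_neg_sub_le_of_le (hs : 0 < s) (hsr : s ≤ r) (hb0 : 0 ≤ b) :
    |r ^ (-b) - s ^ (-b)| ≤ s ^ (-b) :=
  abs_sub_le_of_nonneg_of_le (rpow_nonneg (hs.le.trans hsr) _)
    (rpow_le_rpow_of_nonpos hs hsr (neg_nonpos.2 hb0)) (rpow_nonneg hs.le _) le_rfl

end RpowDifference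

section ProductEstimate

variable {N : ℕ} {b ε d r₁ s₁ r₂ s₂ : ℝ}

lemma mul_abs_rpow_neg_sub_le_of_le_two_mul (hb0 : 0 ≤ b) (hbN : b ≤ N) (hε0 : 0 < ε)
    (hε1 : ε ≤ 1) (hr₁ : 0 < r₁) (hs₁ : 0 < s₁) (hr₂ : 0 < r₂) (hs₂ : 0 < s₂)
    (h₁ : |r₁ - s₁| ≤ d) (h₂ : |r₂ - s₂| ≤ d) (hds₁ : d ≤ 2 * s₁) :
    |r₁ ^ (-b) - s₁ ^ (-b)| * |r₂ ^ (-b) - s₂ ^ (-b)| ≤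
      (N ^ 2 * 3 ^ (N + 1) : ℝ) *
        (r₁ ^ (-b - ε) * (s₂ ^ (-b - ε) + r₂ ^ (-b - ε)) * d ^ (2 * ε)) := by
  have hd : 0 ≤ d := (abs_nonneg _).trans h₁
  have hd2 : d ^ (2 * ε) = d ^ ε * d ^ ε := by
    rw [two_mul, rpow_add' hd (by linarith)]
  have h3 : (3 : ℝ) ^ (b + ε) ≤ 3 ^ (N + 1) := by
    rw [← rpow_natCast]
    push_cast
    exact rpow_le_rpow_of_exponent_le (by norm_num) (by linarith)
  calc |r₁ ^ (-b) - s₁ ^ (-b)| * |r₂ ^ (-b) - s₂ ^ (-b)|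
      ≤ (N * 3 ^ (b + ε) * r₁ ^ (-b - ε) * d ^ ε) * (N * (s₂ ^ (-b - ε) + r₂ ^ (-b - ε)) * d ^ ε) :=
        mul_le_mul (abs_rpow_neg_sub_le_of_le_two_mul hr₁ hs₁ h₁ hds₁ hb0 hbN hε0.le hε1)
          (abs_rpow_neg_sub_le_add hr₂ hs₂ h₂ hb0 hbN hε0.le hε1) (abs_nonneg _) (by positivity)
    _ = N ^ 2 * 3 ^ (b + ε) * (r₁ ^ (-b - ε) * (s₂ ^ (-b - ε) + r₂ ^ (-b - ε)) * d ^ (2 * ε)) := by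
        rw [hd2]
        ring
    _ ≤ _ := by gcongr

lemma mul_abs_rpow_neg_sub_le (hN : 1 ≤ N) (hb0 : 0 ≤ b) (hbN : b ≤ N) (hε0 : 0 < ε)
    (hε1 : ε ≤ 1) (hr₁ : 0 < r₁) (hs₁ : 0 < s₁) (hr₂ : 0 < r₂) (hs₂ : 0 < s₂)
    (h₁ : |r₁ - s₁| ≤ d) (h₂ : |r₂ - s₂| ≤ d) (hd₁ : d ≤ s₁ + r₁) (hd₂ : d ≤ s₂ + r₂) :
    |r₁ ^ (-b) - s₁ ^ (-b)| * |r₂ ^ (-b) - s₂ ^ (-b)| ≤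
      (N ^ 2 * 3 ^ (N + 1) : ℝ) * (r₁ ^ (-b - ε) * (s₂ ^ (-b - ε) + r₂ ^ (-b - ε)) * d ^ (2 * ε))
      + (N ^ 2 * 3 ^ (N + 1) : ℝ) * ((s₁ ^ (-b - ε) + r₁ ^ (-b - ε)) * r₂ ^ (-b - ε) * d ^ (2 * ε))
      + (N ^ 2 * 3 ^ (N + 1) : ℝ) * (s₁ ^ (-b) * s₂ ^ (-b) *
          (if 2 * s₂ < d then 1 else 0) * (if 2 * s₁ < d then 1 else 0)) := by
  have hd : 0 ≤ d := (abs_nonneg _).trans h₁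
  by_cases hds₁ : d ≤ 2 * s₁
  · refine le_add_of_le_of_nonneg (le_add_of_le_of_nonneg ?_ (by positivity)) (by positivity)
    exact mul_abs_rpow_neg_sub_le_of_le_two_mul hb0 hbN hε0 hε1 hr₁ hs₁ hr₂ hs₂ h₁ h₂ hds₁
  by_cases hds₂ : d ≤ 2 * s₂
  · refine le_add_of_le_of_nonneg (le_add_of_nonneg_of_le (by positivity) ?_) (by positivity)
    calc |r₁ ^ (-b) - s₁ ^ (-b)| * |r₂ ^ (-b) - s₂ ^ (-b)|
        = |r₂ ^ (-b) - s₂ ^ (-b)| * |r₁ ^ (-b) - s₁ ^ (-b)| := mul_comm _ _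
      _ ≤ _ := mul_abs_rpow_neg_sub_le_of_le_two_mul hb0 hbN hε0 hε1 hr₂ hs₂ hr₁ hs₁ h₂ h₁ hds₂
      _ = _ := by ring
  rw [not_le] at hds₁ hds₂
  have hK : (1 : ℝ) ≤ N ^ 2 * 3 ^ (N + 1) := by
    have : (1 : ℝ) ≤ N := by exact_mod_cast hN
    nlinarith [one_le_pow₀ (by norm_num : (1 : ℝ) ≤ 3) (n := N + 1)]
  refine le_add_of_nonneg_of_le (by positivity) ?_
  rw [if_pos hds₂, if_pos hds₁, mul_one, mul_one]
  calc |r₁ ^ (-b) - s₁ ^ (-b)| * |r₂ ^ (-b) - s₂ ^ (-b)| ≤ s₁ ^ (-b) * s₂ ^ (-b) :=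
        mul_le_mul (abs_rpow_neg_sub_le_of_le hs₁ (by linarith) hb0)
          (abs_rpow_neg_sub_le_of_le hs₂ (by linarith) hb0) (abs_nonneg _) (by positivity)
    _ ≤ _ := le_mul_of_one_le_left (by positivity) hK

end ProductEstimate

lemma abs_dist_rpow_neg_sub_mul_le {X : Type*} [MetricSpace X] {N : ℕ} (hN : 1 ≤ N) {b ε : ℝ}
    (hb0 : 0 ≤ b) (hbN : b ≤ N) (hε0 : 0 < ε) (hε1 : ε ≤ 1) {x y η ξ : X}
    (hxη : x ≠ η) (hxξ : x ≠ ξ) (hyη : y ≠ η) (hyξ : y ≠ ξ) :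
    |dist η y ^ (-b) - dist η x ^ (-b)| * |dist ξ y ^ (-b) - dist ξ x ^ (-b)| ≤
      (N ^ 2 * 3 ^ (N + 1) : ℝ) * (dist y η ^ (-b - ε) *
        (dist x ξ ^ (-b - ε) + dist y ξ ^ (-b - ε)) * dist x y ^ (2 * ε))
      + (N ^ 2 * 3 ^ (N + 1) : ℝ) * ((dist x η ^ (-b - ε) + dist y η ^ (-b - ε)) *
        dist y ξ ^ (-b - ε) * dist x y ^ (2 * ε))
      + (N ^ 2 * 3 ^ (N + 1) : ℝ) * (dist x η ^ (-b) * dist x ξ ^ (-b) *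
        (if 2 * dist x ξ < dist x y then 1 else 0) *
        (if 2 * dist x η < dist x y then 1 else 0)) := by
  rw [dist_comm η y, dist_comm η x, dist_comm ξ y, dist_comm ξ x]
  exact mul_abs_rpow_neg_sub_le hN hb0 hbN hε0 hε1 (dist_pos.2 hyη) (dist_pos.2 hxη)
    (dist_pos.2 hyξ) (dist_pos.2 hxξ) ((abs_dist_sub_le y x η).trans_eq (dist_comm y x))
    ((abs_dist_sub_le y x ξ).trans_eq (dist_comm y x)) (dist_triangle_right x y η)
    (dist_triangle_right x y ξ)

theorem stmt6 (n : ℕ) (hn : 1 ≤ n) :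
    ∃ C : ℝ, 0 < C ∧
      ∀ (α : ℝ), α ∈ Set.Icc (0 : ℝ) 1 →
      ∀ (ε : ℝ), ε ∈ Set.Ioo (0 : ℝ) 1 →
      ∀ (x y η ξ : EuclideanSpace ℝ (Fin n)),
        x ≠ y → x ≠ η → x ≠ ξ → y ≠ η → y ≠ ξ →
        |‖η - y‖ ^ (-(n : ℝ) + α) - ‖η - x‖ ^ (-(n : ℝ) + α)| *
          |‖ξ - y‖ ^ (-(n : ℝ) + α) - ‖ξ - x‖ ^ (-(n : ℝ) + α)| ≤
        C * (‖y - η‖ ^ (-(n : ℝ) + α - ε) *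
              (‖x - ξ‖ ^ (-(n : ℝ) + α - ε) + ‖y - ξ‖ ^ (-(n : ℝ) + α - ε)) *
              ‖x - y‖ ^ (2 * ε))
        + C * ((‖x - η‖ ^ (-(n : ℝ) + α - ε) + ‖y - η‖ ^ (-(n : ℝ) + α - ε)) *
              ‖y - ξ‖ ^ (-(n : ℝ) + α - ε) * ‖x - y‖ ^ (2 * ε))
        + C * (‖x - η‖ ^ (-(n : ℝ) + α) * ‖x - ξ‖ ^ (-(n : ℝ) + α) *
              (if 2 * ‖x - ξ‖ < ‖x - y‖ then 1 else 0) *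
              (if 2 * ‖x - η‖ < ‖x - y‖ then 1 else 0)) := by
  refine ⟨n ^ 2 * 3 ^ (n + 1), by positivity, ?_⟩
  rintro α ⟨hα0, hα1⟩ ε ⟨hε0, hε1⟩ x y η ξ - hxη hxξ hyη hyξ
  have hn' : (1 : ℝ) ≤ n := by exact_mod_cast hn
  simp only [← dist_eq_norm]
  rw [show -(n : ℝ) + α = -(n - α) by ring]
  exact abs_dist_rpow_neg_sub_mul_le hn (by linarith) (by linarith) hε0 hε1.le hxη hxξ hyη hyξ
end

section
/- Let α ∈ (0,1) and u, v Lipschitz, bounded functions on ℝ^n. Then the three-term commutator H_α(u,v)(x) = (−Δ)^{α/2}(uv)(x) − u(x)(−Δ)^{α/2}v(x) − v(x)(−Δ)^{α/2}u(x) satisfies the pointwise bound |H_α(u,v)(x)| ≤ C ‖∇u‖_∞^{α/2}‖u‖_∞^{1−α/2} · ‖∇v‖_∞^{α/2}‖v‖_∞^{1−α/2} for a constant C depending only on n and α. -/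
open MeasureTheory

/-- Fractional Laplacian of order `α ∈ (0,1)` in singular integral form, with
normalization constant `c`. -/
noncomputable def fracLapSI (n : ℕ) (c α : ℝ)
    (f : EuclideanSpace ℝ (Fin n) → ℝ) (x : EuclideanSpace ℝ (Fin n)) : ℝ :=
  c * ∫ y, (f x - f y) / ‖x - y‖ ^ ((n : ℝ) + α)

/-- The three-term commutator `H_α(u,v)`. -/
noncomputable def Hcomm (n : ℕ) (c α : ℝ)
    (u v : EuclideanSpace ℝ (Fin n) → ℝ) (x : EuclideanSpace ℝ (Fin n)) : ℝ :=
  fracLapSI n c α (fun y => u y * v y) x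
    - u x * fracLapSI n c α v x - v x * fracLapSI n c α u x

/-!
Expanding `u x * v x - u y * v y`, the three singular integrals defining `H_α(u,v)(x)` combine
into `-c ∫ (u x - u y) (v x - v y) |x - y|^(-n-α) dy`. The product of differences is at most
`min (L_u L_v |x - y|², 4 M_u M_v)`; in polar coordinates the integral becomes a one-variable
integral of `min (a r², b) r^(-1-α)`, which is split at the radius `R = (b / a)^(1/2)` where the
two bounds agree, giving `C (L_u L_v)^(α/2) (4 M_u M_v)^(1-α/2)`. The same estimate with `|x - y|`
in place of `|x - y|²` (which needs `α < 1`) shows that each of the three integrals converges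
absolutely, so that they may be combined.
-/

open Set

section RadialProfile

variable {α β a b : ℝ}

theorem min_mul_rpow_le_mul_rpow_left {r : ℝ} (hr : 0 < r) :
    min (a * r ^ β) b * r ^ (-1 - α) ≤ a * r ^ (β - 1 - α) := by
  rw [show β - 1 - α = β + (-1 - α) by ring, Real.rpow_add hr, ← mul_assoc]
  exact mul_le_mul_of_nonneg_right (min_le_left _ _) (Real.rpow_nonneg hr.le _)

theorem min_mul_rpow_le_mul_rpow_right {r : ℝ} (hr : 0 ≤ r) :
    min (a * r ^ β) b * r ^ (-1 - α) ≤ b * r ^ (-1 - α) :=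
  mul_le_mul_of_nonneg_right (min_le_right _ _) (Real.rpow_nonneg hr _)

theorem min_mul_rpow_nonneg (ha : 0 ≤ a) (hb : 0 ≤ b) {r : ℝ} (hr : 0 ≤ r) :
    0 ≤ min (a * r ^ β) b * r ^ (-1 - α) := by
  have := Real.rpow_nonneg hr β
  have := Real.rpow_nonneg hr (-1 - α)
  positivity

theorem integrableOn_Ioc_mul_rpow (hαβ : α < β) (R : ℝ) :
    IntegrableOn (fun r : ℝ ↦ a * r ^ (β - 1 - α)) (Ioc 0 R) :=
  ((intervalIntegral.intervalIntegrable_rpow' (by linarith)).1).const_mul a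

theorem integrableOn_Ioi_mul_rpow (hα : 0 < α) {R : ℝ} (hR : 0 < R) :
    IntegrableOn (fun r : ℝ ↦ b * r ^ (-1 - α)) (Ioi R) :=
  (integrableOn_Ioi_rpow_of_lt (by linarith) hR).const_mul b

theorem integral_Ioc_mul_rpow (hαβ : α < β) {R : ℝ} (hR : 0 ≤ R) :
    ∫ r in Ioc 0 R, a * r ^ (β - 1 - α) = a * R ^ (β - α) / (β - α) := by
  rw [integral_const_mul, ← intervalIntegral.integral_of_le hR,
    integral_rpow (Or.inl (by linarith)), show β - 1 - α + 1 = β - α by ring,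
    Real.zero_rpow (by linarith), sub_zero, mul_div_assoc]

theorem integral_Ioi_mul_rpow (hα : 0 < α) {R : ℝ} (hR : 0 < R) :
    ∫ r in Ioi R, b * r ^ (-1 - α) = b * R ^ (-α) / α := by
  rw [integral_const_mul, integral_Ioi_rpow_of_lt (by linarith) hR,
    show -1 - α + 1 = -α by ring]
  ring

theorem integrableOn_Ioc_min_mul_rpow (hαβ : α < β) (ha : 0 ≤ a) (hb : 0 ≤ b) (R : ℝ) :
    IntegrableOn (fun r ↦ min (a * r ^ β) b * r ^ (-1 - α)) (Ioc 0 R) := by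
  refine (integrableOn_Ioc_mul_rpow (a := a) hαβ R).mono' (by fun_prop) ?_
  filter_upwards [ae_restrict_mem measurableSet_Ioc] with r hr
  rw [Real.norm_of_nonneg (min_mul_rpow_nonneg ha hb hr.1.le)]
  exact min_mul_rpow_le_mul_rpow_left hr.1

theorem integrableOn_Ioi_min_mul_rpow (hα : 0 < α) (ha : 0 ≤ a) (hb : 0 ≤ b) {R : ℝ}
    (hR : 0 < R) : IntegrableOn (fun r ↦ min (a * r ^ β) b * r ^ (-1 - α)) (Ioi R) := by
  refine (integrableOn_Ioi_mul_rpow (b := b) hα hR).mono' (by fun_prop) ?_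
  filter_upwards [ae_restrict_mem measurableSet_Ioi] with r hr
  rw [Real.norm_of_nonneg (min_mul_rpow_nonneg ha hb (hR.trans hr).le)]
  exact min_mul_rpow_le_mul_rpow_right (hR.trans hr).le

theorem integrableOn_Ioi_zero_min_mul_rpow (hα : 0 < α) (hαβ : α < β) (ha : 0 ≤ a)
    (hb : 0 ≤ b) : IntegrableOn (fun r ↦ min (a * r ^ β) b * r ^ (-1 - α)) (Ioi 0) := by
  rw [← Ioc_union_Ioi_eq_Ioi zero_le_one]
  exact (integrableOn_Ioc_min_mul_rpow hαβ ha hb 1).union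
    (integrableOn_Ioi_min_mul_rpow hα ha hb one_pos)

theorem integral_Ioi_min_mul_rpow_le (hα : 0 < α) (hαβ : α < β) (ha : 0 ≤ a) (hb : 0 ≤ b)
    {R : ℝ} (hR : 0 < R) :
    ∫ r in Ioi 0, min (a * r ^ β) b * r ^ (-1 - α)
      ≤ a * R ^ (β - α) / (β - α) + b * R ^ (-α) / α := by
  rw [← Ioc_union_Ioi_eq_Ioi hR.le, setIntegral_union Ioc_disjoint_Ioi_same measurableSet_Ioi
    (integrableOn_Ioc_min_mul_rpow hαβ ha hb R) (integrableOn_Ioi_min_mul_rpow hα ha hb hR),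
    ← integral_Ioc_mul_rpow hαβ hR.le, ← integral_Ioi_mul_rpow hα hR]
  gcongr ?_ + ?_
  · exact setIntegral_mono_on (integrableOn_Ioc_min_mul_rpow hαβ ha hb R)
      (integrableOn_Ioc_mul_rpow hαβ R) measurableSet_Ioc
      fun r hr ↦ min_mul_rpow_le_mul_rpow_left hr.1
  · exact setIntegral_mono_on (integrableOn_Ioi_min_mul_rpow hα ha hb hR)
      (integrableOn_Ioi_mul_rpow hα hR) measurableSet_Ioi
      fun r hr ↦ min_mul_rpow_le_mul_rpow_right (hR.trans hr).le

/-- The choice `R = (b / a) ^ (1 / β)` balances the two terms of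
`integral_Ioi_min_mul_rpow_le`. -/
theorem integral_Ioi_min_mul_rpow_le_rpow_mul_rpow (hα : 0 < α) (hαβ : α < β) (ha : 0 ≤ a)
    (hb : 0 ≤ b) :
    ∫ r in Ioi 0, min (a * r ^ β) b * r ^ (-1 - α)
      ≤ (1 / (β - α) + 1 / α) * (a ^ (α / β) * b ^ (1 - α / β)) := by
  have hβ : 0 < β := hα.trans hαβ
  have hrhs : 0 ≤ (1 / (β - α) + 1 / α) * (a ^ (α / β) * b ^ (1 - α / β)) := by
    have := sub_pos.2 hαβ
    have := Real.rpow_nonneg ha (α / β)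
    have := Real.rpow_nonneg hb (1 - α / β)
    positivity
  rcases ha.eq_or_lt with rfl | ha
  · refine (setIntegral_eq_zero_of_forall_eq_zero fun r _ ↦ ?_).trans_le hrhs
    rw [zero_mul, min_eq_left hb, zero_mul]
  rcases hb.eq_or_lt with rfl | hb
  · refine (setIntegral_eq_zero_of_forall_eq_zero fun r (hr : 0 < r) ↦ ?_).trans_le hrhs
    rw [min_eq_right (mul_nonneg ha.le (Real.rpow_nonneg hr.le _)), zero_mul]
  have hR : 0 < (b / a) ^ (1 / β) := by positivity
  refine (integral_Ioi_min_mul_rpow_le hα hαβ ha.le hb.le hR).trans_eq ?_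
  have hsplit : ∀ {x : ℝ}, 0 < x → x ^ (α / β) * x ^ (1 - α / β) = x := fun hx ↦ by
    rw [← Real.rpow_add hx, add_sub_cancel, Real.rpow_one]
  have hnear : a * (b / a) ^ (1 - α / β) = a ^ (α / β) * b ^ (1 - α / β) := by
    rw [Real.div_rpow hb.le ha.le, mul_div_assoc', div_eq_iff (by positivity), mul_right_comm,
      hsplit ha]
  have hfar : b * ((b / a) ^ (α / β))⁻¹ = a ^ (α / β) * b ^ (1 - α / β) := by
    rw [Real.div_rpow hb.le ha.le, inv_div, mul_div_assoc', div_eq_iff (by positivity),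
      mul_assoc, mul_comm (b ^ _), hsplit hb, mul_comm]
  rw [← Real.rpow_mul (by positivity), ← Real.rpow_mul (by positivity),
    show 1 / β * (β - α) = 1 - α / β by field_simp, show 1 / β * -α = -(α / β) by ring,
    Real.rpow_neg (by positivity), hnear, hfar]
  ring

end RadialProfile

theorem abs_div_norm_sub_rpow_le {E : Type*} [SeminormedAddCommGroup E] {a b β s : ℝ}
    {g : E → ℝ} {x y : E}
    (hg : |g y| ≤ min (a * ‖x - y‖ ^ β) b) :
    |g y / ‖x - y‖ ^ s| ≤ min (a * ‖x - y‖ ^ β) b * ‖x - y‖ ^ (-s) := by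
  rw [abs_div, abs_of_nonneg (Real.rpow_nonneg (norm_nonneg _) _), div_eq_mul_inv,
    ← Real.rpow_neg (norm_nonneg _)]
  exact mul_le_mul_of_nonneg_right hg (Real.rpow_nonneg (norm_nonneg _) _)

theorem LipschitzWith.abs_sub_le_min {E : Type*} [SeminormedAddCommGroup E] {f : E → ℝ}
    {L : NNReal} {M : ℝ} (hf : LipschitzWith L f) (hM : ∀ z, |f z| ≤ M) (x y : E) :
    |f x - f y| ≤ min (L * ‖x - y‖) (2 * M) := by
  refine le_min ?_ ?_
  · rw [← Real.dist_eq, ← dist_eq_norm]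
    exact hf.dist_le_mul x y
  · linarith [abs_sub (f x) (f y), hM x, hM y]

theorem abs_mul_sub_mul_sub_le_min {E : Type*} [SeminormedAddCommGroup E] {u v : E → ℝ}
    {Lu Lv : NNReal} {Mu Mv : ℝ} (hu : LipschitzWith Lu u) (hv : LipschitzWith Lv v)
    (hMu : ∀ z, |u z| ≤ Mu) (hMv : ∀ z, |v z| ≤ Mv) (x y : E) :
    |(u x - u y) * (v x - v y)| ≤ min ((Lu * Lv : ℝ) * ‖x - y‖ ^ (2 : ℝ)) (4 * (Mu * Mv)) := by
  have hu' := hu.abs_sub_le_min hMu x y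
  have hv' := hv.abs_sub_le_min hMv x y
  rw [abs_mul, Real.rpow_two]
  refine le_min ?_ ?_
  · calc |u x - u y| * |v x - v y| ≤ (Lu * ‖x - y‖) * (Lv * ‖x - y‖) :=
          mul_le_mul (hu'.trans (min_le_left _ _)) (hv'.trans (min_le_left _ _))
            (abs_nonneg _) (by positivity)
      _ = (Lu * Lv : ℝ) * ‖x - y‖ ^ 2 := by ring
  · calc |u x - u y| * |v x - v y| ≤ (2 * Mu) * (2 * Mv) :=
          mul_le_mul (hu'.trans (min_le_right _ _)) (hv'.trans (min_le_right _ _))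
            (abs_nonneg _) (by linarith [abs_nonneg (u x), hMu x])
      _ = 4 * (Mu * Mv) := by ring

theorem mul_rpow_mul_four_mul_rpow_le {θ L₁ L₂ M₁ M₂ : ℝ} (hθ : 0 ≤ θ) (hL₁ : 0 ≤ L₁)
    (hL₂ : 0 ≤ L₂) (hM₁ : 0 ≤ M₁) (hM₂ : 0 ≤ M₂) :
    (L₁ * L₂) ^ θ * (4 * (M₁ * M₂)) ^ (1 - θ)
      ≤ 4 * ((L₁ ^ θ * M₁ ^ (1 - θ)) * (L₂ ^ θ * M₂ ^ (1 - θ))) := by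
  have h4 : (4 : ℝ) ^ (1 - θ) ≤ 4 :=
    (Real.rpow_le_rpow_of_exponent_le (by norm_num) (by linarith)).trans_eq (Real.rpow_one 4)
  rw [Real.mul_rpow hL₁ hL₂, Real.mul_rpow (by norm_num) (mul_nonneg hM₁ hM₂),
    Real.mul_rpow hM₁ hM₂]
  have := Real.rpow_nonneg hL₁ θ
  have := Real.rpow_nonneg hL₂ θ
  have := Real.rpow_nonneg hM₁ (1 - θ)
  have := Real.rpow_nonneg hM₂ (1 - θ)
  calc L₁ ^ θ * L₂ ^ θ * (4 ^ (1 - θ) * (M₁ ^ (1 - θ) * M₂ ^ (1 - θ)))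
      = 4 ^ (1 - θ) * ((L₁ ^ θ * M₁ ^ (1 - θ)) * (L₂ ^ θ * M₂ ^ (1 - θ))) := by ring
    _ ≤ _ := by gcongr

section SingularKernel

variable {E : Type*} [NormedAddCommGroup E] [NormedSpace ℝ E] [MeasurableSpace E]
  [BorelSpace E] [FiniteDimensional ℝ E] [Nontrivial E] (μ : Measure E) [μ.IsAddHaarMeasure]
  {α β a b : ℝ}

local notation "dim" => Module.finrank ℝ E

theorem pow_smul_min_mul_rpow_eq {d : ℕ} (hd : 1 ≤ d) {r : ℝ} (hr : 0 < r) :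
    r ^ (d - 1) • (min (a * r ^ β) b * r ^ (-((d : ℝ) + α)))
      = min (a * r ^ β) b * r ^ (-1 - α) := by
  rw [smul_eq_mul, mul_left_comm, ← Real.rpow_natCast, ← Real.rpow_add hr,
    Nat.cast_sub hd, Nat.cast_one]
  ring_nf

theorem integrable_min_mul_norm_rpow (hα : 0 < α) (hαβ : α < β) (ha : 0 ≤ a) (hb : 0 ≤ b) :
    Integrable (fun y : E ↦
      min (a * ‖y‖ ^ β) b * ‖y‖ ^ (-((dim : ℝ) + α))) μ :=
  (integrable_fun_norm_addHaar μ).2 <|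
    (integrableOn_Ioi_zero_min_mul_rpow hα hαβ ha hb).congr_fun
      (fun _ hr ↦ (pow_smul_min_mul_rpow_eq Module.finrank_pos hr).symm) measurableSet_Ioi

theorem integral_min_mul_norm_rpow_le (hα : 0 < α) (hαβ : α < β) (ha : 0 ≤ a) (hb : 0 ≤ b) :
    ∫ y, min (a * ‖y‖ ^ β) b * ‖y‖ ^ (-((dim : ℝ) + α)) ∂μ
      ≤ dim * μ.real (Metric.ball 0 1) *
        ((1 / (β - α) + 1 / α) * (a ^ (α / β) * b ^ (1 - α / β))) := by
  rw [integral_fun_norm_addHaar μ (fun r ↦ min (a * r ^ β) b * r ^ (-((dim : ℝ) + α))),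
    setIntegral_congr_fun measurableSet_Ioi
      (fun _ hr ↦ pow_smul_min_mul_rpow_eq Module.finrank_pos hr), nsmul_eq_mul, smul_eq_mul,
    mul_assoc]
  gcongr
  exact integral_Ioi_min_mul_rpow_le_rpow_mul_rpow hα hαβ ha hb

theorem integrable_div_norm_sub_rpow (hα : 0 < α) (hαβ : α < β) (ha : 0 ≤ a) (hb : 0 ≤ b)
    {g : E → ℝ} (hg : AEStronglyMeasurable g μ) {x : E}
    (hgx : ∀ y, |g y| ≤ min (a * ‖x - y‖ ^ β) b) :
    Integrable (fun y ↦ g y / ‖x - y‖ ^ ((dim : ℝ) + α)) μ :=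
  ((integrable_min_mul_norm_rpow μ hα hαβ ha hb).comp_sub_left x).mono'
    (hg.aemeasurable.div (by fun_prop)).aestronglyMeasurable
    (.of_forall fun _ ↦ abs_div_norm_sub_rpow_le (hgx _))

theorem abs_integral_div_norm_sub_rpow_le (hα : 0 < α) (hαβ : α < β) (ha : 0 ≤ a) (hb : 0 ≤ b)
    {g : E → ℝ} (hg : AEStronglyMeasurable g μ) {x : E}
    (hgx : ∀ y, |g y| ≤ min (a * ‖x - y‖ ^ β) b) :
    |∫ y, g y / ‖x - y‖ ^ ((dim : ℝ) + α) ∂μ|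
      ≤ dim * μ.real (Metric.ball 0 1) *
        ((1 / (β - α) + 1 / α) * (a ^ (α / β) * b ^ (1 - α / β))) :=
  calc |∫ y, g y / ‖x - y‖ ^ ((dim : ℝ) + α) ∂μ|
      ≤ ∫ y, min (a * ‖x - y‖ ^ β) b * ‖x - y‖ ^ (-((dim : ℝ) + α)) ∂μ :=
        (abs_integral_le_integral_abs).trans <| integral_mono
          (integrable_div_norm_sub_rpow μ hα hαβ ha hb hg hgx).abs
          ((integrable_min_mul_norm_rpow μ hα hαβ ha hb).comp_sub_left x)
          fun _ ↦ abs_div_norm_sub_rpow_le (hgx _)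
    _ = ∫ y, min (a * ‖y‖ ^ β) b * ‖y‖ ^ (-((dim : ℝ) + α)) ∂μ :=
        integral_sub_left_eq_self (fun y ↦ min (a * ‖y‖ ^ β) b *
          ‖y‖ ^ (-((dim : ℝ) + α))) μ x
    _ ≤ _ := integral_min_mul_norm_rpow_le μ hα hαβ ha hb

theorem LipschitzWith.integrable_sub_div_norm_sub_rpow {f : E → ℝ} {L : NNReal} {M : ℝ}
    (hf : LipschitzWith L f) (hM : ∀ z, |f z| ≤ M) (hα : 0 < α) (hα1 : α < 1) (x : E) :
    Integrable (fun y ↦ (f x - f y) / ‖x - y‖ ^ ((dim : ℝ) + α)) μ :=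
  integrable_div_norm_sub_rpow μ (β := 1) (b := 2 * M) (g := fun y ↦ f x - f y) hα hα1
    L.coe_nonneg (by linarith [abs_nonneg (f x), hM x])
    (continuous_const.sub hf.continuous).aestronglyMeasurable
    fun y ↦ by simpa only [Real.rpow_one] using hf.abs_sub_le_min hM x y

variable {u v : E → ℝ} {Lu Lv : NNReal} {Mu Mv : ℝ}

theorem LipschitzWith.integrable_mul_sub_div_norm_sub_rpow (hu : LipschitzWith Lu u)
    (hv : LipschitzWith Lv v) (hMu : ∀ z, |u z| ≤ Mu) (hMv : ∀ z, |v z| ≤ Mv) (hα : 0 < α)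
    (hα2 : α < 2) (x : E) :
    Integrable (fun y ↦ (u x - u y) * (v x - v y) / ‖x - y‖ ^ ((dim : ℝ) + α)) μ := by
  have hMu0 : 0 ≤ Mu := (abs_nonneg _).trans (hMu x)
  have hMv0 : 0 ≤ Mv := (abs_nonneg _).trans (hMv x)
  exact integrable_div_norm_sub_rpow μ hα hα2 (by positivity) (by positivity)
    ((continuous_const.sub hu.continuous).mul
      (continuous_const.sub hv.continuous)).aestronglyMeasurable
    (abs_mul_sub_mul_sub_le_min hu hv hMu hMv x)

theorem LipschitzWith.abs_integral_mul_sub_div_norm_sub_rpow_le (hu : LipschitzWith Lu u)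
    (hv : LipschitzWith Lv v) (hMu : ∀ z, |u z| ≤ Mu) (hMv : ∀ z, |v z| ≤ Mv) (hα : 0 < α)
    (hα2 : α < 2) (x : E) :
    |∫ y, (u x - u y) * (v x - v y) / ‖x - y‖ ^ ((dim : ℝ) + α) ∂μ|
      ≤ dim * μ.real (Metric.ball 0 1) * (1 / (2 - α) + 1 / α) * 4 *
        (((Lu : ℝ) ^ (α / 2) * Mu ^ (1 - α / 2)) * ((Lv : ℝ) ^ (α / 2) * Mv ^ (1 - α / 2))) := by
  have hMu0 : 0 ≤ Mu := (abs_nonneg _).trans (hMu x)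
  have hMv0 : 0 ≤ Mv := (abs_nonneg _).trans (hMv x)
  have h2α : 0 < 2 - α := by linarith
  calc |∫ y, (u x - u y) * (v x - v y) / ‖x - y‖ ^ ((dim : ℝ) + α) ∂μ|
      ≤ dim * μ.real (Metric.ball 0 1) *
          ((1 / (2 - α) + 1 / α) * ((Lu * Lv : ℝ) ^ (α / 2) * (4 * (Mu * Mv)) ^ (1 - α / 2))) :=
        abs_integral_div_norm_sub_rpow_le μ hα hα2 (by positivity) (by positivity)
          ((continuous_const.sub hu.continuous).mul
            (continuous_const.sub hv.continuous)).aestronglyMeasurable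
          (abs_mul_sub_mul_sub_le_min hu hv hMu hMv x)
    _ ≤ dim * μ.real (Metric.ball 0 1) * ((1 / (2 - α) + 1 / α) *
          (4 * (((Lu : ℝ) ^ (α / 2) * Mu ^ (1 - α / 2)) *
            ((Lv : ℝ) ^ (α / 2) * Mv ^ (1 - α / 2))))) := by
        gcongr _ * (_ * ?_)
        exact mul_rpow_mul_four_mul_rpow_le (by positivity) Lu.coe_nonneg Lv.coe_nonneg hMu0 hMv0
    _ = _ := by ring

end SingularKernel

theorem Hcomm_eq_neg_mul_integral {n : ℕ} {c α : ℝ} {u v : EuclideanSpace ℝ (Fin n) → ℝ}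
    {x : EuclideanSpace ℝ (Fin n)}
    (hu : Integrable (fun y ↦ (u x - u y) / ‖x - y‖ ^ ((n : ℝ) + α)))
    (hv : Integrable (fun y ↦ (v x - v y) / ‖x - y‖ ^ ((n : ℝ) + α)))
    (huv : Integrable (fun y ↦ (u x - u y) * (v x - v y) / ‖x - y‖ ^ ((n : ℝ) + α))) :
    Hcomm n c α u v x = -c * ∫ y, (u x - u y) * (v x - v y) / ‖x - y‖ ^ ((n : ℝ) + α) := by
  have hprod : ∫ y, (u x * v x - u y * v y) / ‖x - y‖ ^ ((n : ℝ) + α)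
      = u x * (∫ y, (v x - v y) / ‖x - y‖ ^ ((n : ℝ) + α))
        + v x * (∫ y, (u x - u y) / ‖x - y‖ ^ ((n : ℝ) + α))
        - ∫ y, (u x - u y) * (v x - v y) / ‖x - y‖ ^ ((n : ℝ) + α) := by
    have hsplit : (fun y ↦ (u x * v x - u y * v y) / ‖x - y‖ ^ ((n : ℝ) + α))
        = fun y ↦ u x * ((v x - v y) / ‖x - y‖ ^ ((n : ℝ) + α))
          + v x * ((u x - u y) / ‖x - y‖ ^ ((n : ℝ) + α))
          - (u x - u y) * (v x - v y) / ‖x - y‖ ^ ((n : ℝ) + α) := by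
      ext y
      ring
    rw [hsplit, integral_sub ((hv.const_mul _).fun_add (hu.const_mul _)) huv,
      integral_add (hv.const_mul _) (hu.const_mul _), integral_const_mul, integral_const_mul]
  simp only [Hcomm, fracLapSI, hprod]
  ring

theorem stmt12 (n : ℕ) (hn : 1 ≤ n) (α : ℝ) (hα : α ∈ Set.Ioo (0 : ℝ) 1)
    (c : ℝ) (hc : 0 < c) :
    ∃ C : ℝ, 0 < C ∧
      ∀ (u v : EuclideanSpace ℝ (Fin n) → ℝ) (Lu Lv : NNReal) (Mu Mv : ℝ),
        LipschitzWith Lu u → LipschitzWith Lv v →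
        (∀ x, |u x| ≤ Mu) → (∀ x, |v x| ≤ Mv) →
        ∀ x, |Hcomm n c α u v x| ≤
          C * ((Lu : ℝ) ^ (α / 2) * Mu ^ (1 - α / 2)) *
            ((Lv : ℝ) ^ (α / 2) * Mv ^ (1 - α / 2)) := by
  obtain ⟨hα0, hα1⟩ := hα
  have : Nonempty (Fin n) := ⟨⟨0, hn⟩⟩
  have hball : 0 < volume.real (Metric.ball (0 : EuclideanSpace ℝ (Fin n)) 1) :=
    ENNReal.toReal_pos (Metric.measure_ball_pos _ _ one_pos).ne' measure_ball_lt_top.ne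
  have h2α : 0 < 2 - α := by linarith
  refine ⟨c * (n * volume.real (Metric.ball (0 : EuclideanSpace ℝ (Fin n)) 1) *
    (1 / (2 - α) + 1 / α) * 4), by positivity, fun u v Lu Lv Mu Mv hu hv hMu hMv x ↦ ?_⟩
  have hu_int := hu.integrable_sub_div_norm_sub_rpow volume hMu hα0 hα1 x
  have hv_int := hv.integrable_sub_div_norm_sub_rpow volume hMv hα0 hα1 x
  have huv_int := hu.integrable_mul_sub_div_norm_sub_rpow volume hv hMu hMv hα0 (by linarith) x
  have huv_le := hu.abs_integral_mul_sub_div_norm_sub_rpow_le volume hv hMu hMv hα0 (by linarith) x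
  rw [finrank_euclideanSpace_fin] at hu_int hv_int huv_int huv_le
  rw [Hcomm_eq_neg_mul_integral hu_int hv_int huv_int, abs_mul, abs_neg, abs_of_pos hc,
    mul_assoc (c * _), mul_assoc c]
  exact mul_le_mul_of_nonneg_left huv_le hc.le
end
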